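/- For the GEE with equicorrelated-row-sum structure, the estimator using the true correlation matrix has the same asymptotic variance as the one using the identity working correlation: if R_0 is an invertible M×M correlation matrix whose rows each sum to a > 0, Γ = h·1 (a constant multiple of the all-ones vector), and A = σ²·I, then the sandwich variance (Γᵀ V^{-1} Γ)^{-1} (Γᵀ V^{-1} Σ_S V^{-1} Γ) (Γᵀ V^{-1} Γ)^{-1} with V = A^{1/2} R_w A^{1/2} and Σ_S = σ² R_0 takes the same value a·σ²/(M h²) whether R_w = R_0 or R_w = I. -/

import Mathlib

/-!
If `Γ` is an eigenvector of `R₀` with eigenvalue `a`, then `V⁻¹ Γ` is a multiple of `Γ` for both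
working correlations `R₀` and `I`, so each sandwich collapses to a scalar `x⁻¹ (c x) x⁻¹ = c x⁻¹`
with bread `x = Γᵀ V⁻¹ Γ`. With the true correlation the meat equals the bread (`c = 1`) and the
variance is `(Γᵀ V⁻¹ Γ)⁻¹ = a σ² / Γᵀ Γ`; with the identity the meat is `a` times the bread,
giving `a (σ⁻² Γᵀ Γ)⁻¹`, the same value.
-/

open Matrix

/-- The scalar GEE sandwich variance
`(Γᵀ V⁻¹ Γ)⁻¹ (Γᵀ V⁻¹ Σ_S V⁻¹ Γ) (Γᵀ V⁻¹ Γ)⁻¹` with `V = A^{1/2} R_w A^{1/2}`,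
`A = σ² I` (so `V = σ² R_w`), `Γ = h·1` and `Σ_S = σ² R₀`. -/
noncomputable def sandwichVar (M : ℕ) (h σsq : ℝ)
    (Rw SigS : Matrix (Fin M) (Fin M) ℝ) : ℝ :=
  let Γ : Fin M → ℝ := fun _ => h
  let V := σsq • Rw
  (Γ ⬝ᵥ V⁻¹.mulVec Γ)⁻¹ * (Γ ⬝ᵥ (V⁻¹ * SigS * V⁻¹).mulVec Γ) *
    (Γ ⬝ᵥ V⁻¹.mulVec Γ)⁻¹

theorem inv_mul_mul_inv_self {G₀ : Type*} [GroupWithZero G₀] (x : G₀) : x⁻¹ * x * x⁻¹ = x⁻¹ := by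
  simpa using mul_inv_mul_cancel x⁻¹

namespace Matrix

variable {n K : Type*} [Fintype n] [DecidableEq n] [Field K]

theorem inv_mul_mul_inv (A : Matrix n n K) : A⁻¹ * A * A⁻¹ = A⁻¹ := by
  by_cases hA : IsUnit A.det
  · rw [mul_nonsing_inv_cancel_right _ _ hA]
  · rw [nonsing_inv_apply_not_isUnit A hA, Matrix.mul_zero]

theorem inv_smul_of_isUnit_det {A : Matrix n n K} (hA : IsUnit A.det) (c : K) :
    (c • A)⁻¹ = c⁻¹ • A⁻¹ := by
  rcases eq_or_ne c 0 with rfl | hc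
  · simp
  · refine inv_eq_right_inv ?_
    rw [smul_mul_smul_comm, mul_nonsing_inv A hA, mul_inv_cancel₀ hc, one_smul]

theorem inv_mulVec_of_mulVec_eq_smul {A : Matrix n n K} (hA : IsUnit A.det) {v : n → K} {a : K}
    (hv : A *ᵥ v = a • v) : A⁻¹ *ᵥ v = a⁻¹ • v := by
  have hv' : v = a • A⁻¹ *ᵥ v := by
    rw [← mulVec_smul, ← hv, mulVec_mulVec, nonsing_inv_mul _ hA, one_mulVec]
  rcases eq_or_ne a 0 with rfl | ha
  · rw [zero_smul] at hv'
    rw [hv', mulVec_zero, smul_zero]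
  · rw [hv', smul_smul, inv_mul_cancel₀ ha, one_smul, ← hv']

end Matrix

section SandwichVariance

variable {n K : Type*} [Fintype n] [DecidableEq n] [Field K]

noncomputable def sandwichVariance (Γ : n → K) (V S : Matrix n n K) : K :=
  (Γ ⬝ᵥ V⁻¹ *ᵥ Γ)⁻¹ * (Γ ⬝ᵥ (V⁻¹ * S * V⁻¹) *ᵥ Γ) * (Γ ⬝ᵥ V⁻¹ *ᵥ Γ)⁻¹

theorem sandwichVariance_eq_of_meat_eq {Γ : n → K} {V S : Matrix n n K} {c : K}
    (hmeat : Γ ⬝ᵥ (V⁻¹ * S * V⁻¹) *ᵥ Γ = c * (Γ ⬝ᵥ V⁻¹ *ᵥ Γ)) :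
    sandwichVariance Γ V S = c * (Γ ⬝ᵥ V⁻¹ *ᵥ Γ)⁻¹ := by
  set x := Γ ⬝ᵥ V⁻¹ *ᵥ Γ
  calc sandwichVariance Γ V S = c * (x⁻¹ * x * x⁻¹) := by rw [sandwichVariance, hmeat]; ring
    _ = c * x⁻¹ := by rw [inv_mul_mul_inv_self]

theorem sandwichVariance_self (Γ : n → K) (V : Matrix n n K) :
    sandwichVariance Γ V V = (Γ ⬝ᵥ V⁻¹ *ᵥ Γ)⁻¹ := by
  simpa using sandwichVariance_eq_of_meat_eq (c := (1 : K)) (by rw [inv_mul_mul_inv, one_mul])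

variable {R : Matrix n n K} {Γ : n → K} {a : K}

theorem sandwichVariance_smul_self_of_mulVec_eq_smul (hR : IsUnit R.det)
    (hΓ : R *ᵥ Γ = a • Γ) (σsq : K) :
    sandwichVariance Γ (σsq • R) (σsq • R) = a * σsq / (Γ ⬝ᵥ Γ) := by
  rw [sandwichVariance_self, inv_smul_of_isUnit_det hR, smul_mulVec,
    inv_mulVec_of_mulVec_eq_smul hR hΓ, dotProduct_smul, dotProduct_smul, smul_eq_mul,
    smul_eq_mul, mul_inv, mul_inv, inv_inv, inv_inv]
  ring

theorem sandwichVariance_smul_one_of_mulVec_eq_smul (hΓ : R *ᵥ Γ = a • Γ) (σsq : K) :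
    sandwichVariance Γ (σsq • 1) (σsq • R) = a * σsq / (Γ ⬝ᵥ Γ) := by
  have hVinv : (σsq • (1 : Matrix n n K))⁻¹ = σsq⁻¹ • 1 := by
    rw [inv_smul_of_isUnit_det (by simp), inv_one]
  have hmeat : (σsq⁻¹ • (1 : Matrix n n K)) * (σsq • R) * (σsq⁻¹ • 1) = σsq⁻¹ • R := by
    rw [smul_mul_smul_comm, Matrix.one_mul, smul_mul_smul_comm, Matrix.mul_one,
      inv_mul_mul_inv_self]
  rw [sandwichVariance_eq_of_meat_eq (c := a)]
  · simp only [hVinv, smul_mulVec, one_mulVec, dotProduct_smul, smul_eq_mul, mul_inv, inv_inv]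
    ring
  · simp only [hVinv, hmeat, smul_mulVec, one_mulVec, hΓ, dotProduct_smul, smul_eq_mul]
    ring

end SandwichVariance

theorem sandwichVar_eq_sandwichVariance (M : ℕ) (h σsq : ℝ) (Rw S : Matrix (Fin M) (Fin M) ℝ) :
    sandwichVar M h σsq Rw S = sandwichVariance (fun _ => h) (σsq • Rw) S :=
  rfl

theorem sandwich_variance_independent_working_equals_true_general
    (M : ℕ) (h : ℝ) (σsq : ℝ)
    (R₀ : Matrix (Fin M) (Fin M) ℝ) (hinv : IsUnit R₀.det)
    (a : ℝ)
    (hrow : R₀.mulVec (fun _ => 1) = a • (fun _ => (1 : ℝ))) :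
    sandwichVar M h σsq R₀ (σsq • R₀) = a * σsq / (M * h ^ 2) ∧
    sandwichVar M h σsq (1 : Matrix (Fin M) (Fin M) ℝ) (σsq • R₀)
      = a * σsq / (M * h ^ 2) := by
  have hΓ_eq : (fun _ : Fin M => h) = h • fun _ => (1 : ℝ) := by
    ext; simp
  have hΓ : R₀ *ᵥ (fun _ => h) = a • fun _ => h := by
    rw [hΓ_eq, mulVec_smul, hrow, smul_comm]
  have hΓΓ : (fun _ : Fin M => h) ⬝ᵥ (fun _ => h) = M * h ^ 2 := by
    simp [dotProduct, sq]
  rw [sandwichVar_eq_sandwichVariance, sandwichVar_eq_sandwichVariance, ← hΓΓ]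
  exact ⟨sandwichVariance_smul_self_of_mulVec_eq_smul hinv hΓ σsq,
    sandwichVariance_smul_one_of_mulVec_eq_smul hΓ σsq⟩

/-- For the GEE with equal-row-sum correlation structure, the sandwich variance is
the same, namely `a σ²/(M h²)`, whether the working correlation is the true
correlation `R₀` or the identity. -/
theorem sandwich_variance_independent_working_equals_true
    (M : ℕ) (hM : 1 ≤ M) (h : ℝ) (hh : h ≠ 0) (σsq : ℝ) (hσ : 0 < σsq)
    (R₀ : Matrix (Fin M) (Fin M) ℝ) (hsymm : R₀.IsSymm)
    (hdiag : ∀ m, R₀ m m = 1) (hinv : IsUnit R₀.det)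
    (a : ℝ) (ha : 0 < a)
    (hrow : R₀.mulVec (fun _ => 1) = a • (fun _ => (1 : ℝ))) :
    sandwichVar M h σsq R₀ (σsq • R₀) = a * σsq / (M * h ^ 2) ∧
    sandwichVar M h σsq (1 : Matrix (Fin M) (Fin M) ℝ) (σsq • R₀)
      = a * σsq / (M * h ^ 2) :=
  sandwich_variance_independent_working_equals_true_general M h σsq R₀ hinv a hrow
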